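/- arXiv:1111.0131 — 2 statements merged into one kernel-verified Lean document; each statement's English description precedes it below -/
import Mathlib

section
/- The Hesse cubic curve E_{t₀,t₁}: t₀(x₀³+x₁³+x₂³)+t₁x₀x₁x₂ = 0 is singular if and only if (t₀,t₁) is projectively equivalent to one of (0,1), (1,−3), (1,−3ζ), (1,−3ζ²), where ζ is a primitive cube root of unity. -/
/-- The Hesse cubic `E_{t₀,t₁}` is singular iff `(t₀,t₁)` is projectively one of
`(0,1), (1,−3), (1,−3ζ), (1,−3ζ²)`. -/
theorem hesse_singular_iff (ζ : ℂ) (hζ : IsPrimitiveRoot ζ 3) (t0 t1 : ℂ)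
    (ht : ¬(t0 = 0 ∧ t1 = 0)) :
    (∃ x0 x1 x2 : ℂ, ¬(x0 = 0 ∧ x1 = 0 ∧ x2 = 0) ∧
        3 * t0 * x0 ^ 2 + t1 * x1 * x2 = 0 ∧
        3 * t0 * x1 ^ 2 + t1 * x0 * x2 = 0 ∧
        3 * t0 * x2 ^ 2 + t1 * x0 * x1 = 0) ↔
      (∃ c : ℂ, c ≠ 0 ∧
        ((t0, t1) = (c * 0, c * 1) ∨ (t0, t1) = (c * 1, c * (-3)) ∨
         (t0, t1) = (c * 1, c * (-3 * ζ)) ∨ (t0, t1) = (c * 1, c * (-3 * ζ^2)))) := by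
  have hζ3 : ζ ^ 3 = 1 := hζ.pow_eq_one
  have hne1 : ζ ≠ 1 := hζ.ne_one (by norm_num)
  have hsum : ζ ^ 2 + ζ + 1 = 0 := by
    have h : (ζ - 1) * (ζ ^ 2 + ζ + 1) = 0 := by linear_combination hζ3
    rcases mul_eq_zero.mp h with h | h
    · exact absurd (sub_eq_zero.mp h) hne1
    · exact h
  constructor
  · rintro ⟨x0, x1, x2, hx, e1, e2, e3⟩
    by_cases h0 : t0 = 0
    · have h1 : t1 ≠ 0 := fun h => ht ⟨h0, h⟩
      exact ⟨t1, h1, Or.inl (by subst h0; simp)⟩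
    · -- all coordinates are nonzero
      have h3t0 : (3 : ℂ) * t0 ≠ 0 := by
        simp [h0]
      have hx0 : x0 ≠ 0 := by
        intro h
        apply hx
        subst h
        have hx1 : x1 = 0 := by
          have : 3 * t0 * x1 ^ 2 = 0 := by linear_combination e2
          rcases mul_eq_zero.mp this with h | h
          · exact absurd h h3t0
          · exact pow_eq_zero_iff (by norm_num) |>.mp h
        have hx2 : x2 = 0 := by
          have : 3 * t0 * x2 ^ 2 = 0 := by linear_combination e3
          rcases mul_eq_zero.mp this with h | h
          · exact absurd h h3t0
          · exact pow_eq_zero_iff (by norm_num) |>.mp h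
        exact ⟨rfl, hx1, hx2⟩
      have hx1 : x1 ≠ 0 := by
        intro h
        apply hx0
        have : 3 * t0 * x0 ^ 2 = 0 := by rw [← e1, h]; ring
        rcases mul_eq_zero.mp this with h' | h'
        · exact absurd h' h3t0
        · exact pow_eq_zero_iff (by norm_num) |>.mp h'
      have hx2 : x2 ≠ 0 := by
        intro h
        apply hx0
        have : 3 * t0 * x0 ^ 2 = 0 := by rw [← e1, h]; ring
        rcases mul_eq_zero.mp this with h' | h'
        · exact absurd h' h3t0
        · exact pow_eq_zero_iff (by norm_num) |>.mp h'
      have h1 : 3 * t0 * x0 ^ 3 = -(t1 * (x0 * x1 * x2)) := by linear_combination x0 * e1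
      have h2 : 3 * t0 * x1 ^ 3 = -(t1 * (x0 * x1 * x2)) := by linear_combination x1 * e2
      have h3 : 3 * t0 * x2 ^ 3 = -(t1 * (x0 * x1 * x2)) := by linear_combination x2 * e3
      have hp : x0 * x1 * x2 ≠ 0 := mul_ne_zero (mul_ne_zero hx0 hx1) hx2
      have key : (t1 ^ 3 + 27 * t0 ^ 3) * (x0 * x1 * x2) ^ 3 = 0 := by
        have hprod : (3 * t0 * x0 ^ 3) * (3 * t0 * x1 ^ 3) * (3 * t0 * x2 ^ 3)
            = (-(t1 * (x0 * x1 * x2))) * (-(t1 * (x0 * x1 * x2))) * (-(t1 * (x0 * x1 * x2))) := by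
          rw [h1, h2, h3]
        linear_combination hprod
      have h27 : t1 ^ 3 + 27 * t0 ^ 3 = 0 := by
        rcases mul_eq_zero.mp key with h | h
        · exact h
        · exact absurd (pow_eq_zero_iff (by norm_num) |>.mp h) hp
      have hfac : (t1 + 3 * t0) * (t1 + 3 * ζ * t0) * (t1 + 3 * ζ ^ 2 * t0) = 0 := by
        linear_combination h27 + (3 * t0 * t1 ^ 2 + 9 * ζ * t0 ^ 2 * t1) * hsum + 27 * t0 ^ 3 * hζ3
      rcases mul_eq_zero.mp hfac with h | h
      · rcases mul_eq_zero.mp h with h | h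
        · exact ⟨t0, h0, Or.inr (Or.inl (by
            simp only [Prod.mk.injEq]
            constructor
            · ring
            · linear_combination h))⟩
        · exact ⟨t0, h0, Or.inr (Or.inr (Or.inl (by
            simp only [Prod.mk.injEq]
            constructor
            · ring
            · linear_combination h)))⟩
      · exact ⟨t0, h0, Or.inr (Or.inr (Or.inr (by
          simp only [Prod.mk.injEq]
          constructor
          · ring
          · linear_combination h)))⟩
  · rintro ⟨c, hc, h | h | h | h⟩ <;>
      rw [Prod.mk.injEq] at h <;> obtain ⟨ha, hb⟩ := h
    · exact ⟨1, 0, 0, by simp, by rw [ha, hb]; ring, by rw [ha, hb]; ring,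
        by rw [ha, hb]; ring⟩
    · exact ⟨1, 1, 1, by simp, by rw [ha, hb]; ring, by rw [ha, hb]; ring,
        by rw [ha, hb]; ring⟩
    · exact ⟨1, ζ, ζ, by simp, by rw [ha, hb]; linear_combination (-3 * c) * hζ3,
        by rw [ha, hb]; ring, by rw [ha, hb]; ring⟩
    · exact ⟨1, ζ ^ 2, ζ ^ 2, by simp, by rw [ha, hb]; linear_combination (-3 * c * (ζ ^ 3 + 1)) * hζ3,
        by rw [ha, hb]; ring, by rw [ha, hb]; ring⟩
end

section
/- The reflection g̃₀(X,Y) = (Y,X) maps the tropical Hesse curve C_κ to itself for every κ, and the group generated by g̃₀ and T(X,Y)=(Y−X,−X) is isomorphic to the dihedral group of order 6: g̃₀² = T³ = (g̃₀∘T)² = id. -/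
/-- A point of `ℝ²` lies on the tropical Hesse curve `C_κ` if at least two of the four
terms of `F(X,Y;κ) = max(3X,3Y,0,κ+X+Y)` attain the maximum. -/
def OnTropicalHesse (κ : ℝ) (P : ℝ × ℝ) : Prop :=
  ∃ i j : Fin 4, i ≠ j ∧
    (![3 * P.1, 3 * P.2, 0, κ + P.1 + P.2]) i = (![3 * P.1, 3 * P.2, 0, κ + P.1 + P.2]) j ∧
    ∀ k : Fin 4, (![3 * P.1, 3 * P.2, 0, κ + P.1 + P.2]) k ≤
      (![3 * P.1, 3 * P.2, 0, κ + P.1 + P.2]) i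

/-- The reflection `g̃₀(X,Y)=(Y,X)` preserves each tropical Hesse curve, and together with
`T(X,Y)=(Y−X,−X)` it generates a dihedral group of order 6:
`g̃₀² = T³ = (g̃₀∘T)² = id`. -/
theorem tropical_hesse_dihedral :
    (∀ κ : ℝ, ∀ P : ℝ × ℝ, OnTropicalHesse κ P →
      OnTropicalHesse κ ((fun p : ℝ × ℝ => (p.2, p.1)) P)) ∧
    ((fun p : ℝ × ℝ => (p.2, p.1)) ∘ (fun p : ℝ × ℝ => (p.2, p.1)) = id) ∧
    ((fun p : ℝ × ℝ => (p.2 - p.1, -p.1)) ∘ (fun p : ℝ × ℝ => (p.2 - p.1, -p.1)) ∘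
        (fun p : ℝ × ℝ => (p.2 - p.1, -p.1)) = id) ∧
    (((fun p : ℝ × ℝ => (p.2, p.1)) ∘ (fun p : ℝ × ℝ => (p.2 - p.1, -p.1))) ∘
        ((fun p : ℝ × ℝ => (p.2, p.1)) ∘ (fun p : ℝ × ℝ => (p.2 - p.1, -p.1))) = id) := by

  refine ⟨?_, ?_, ?_, ?_⟩
  · intro κ P ⟨i, j, hij, heq, hmax⟩
    show OnTropicalHesse κ (P.2, P.1)
    have key : ∀ k : Fin 4,
        (![3 * ((P.2, P.1) : ℝ × ℝ).1, 3 * ((P.2, P.1) : ℝ × ℝ).2, 0,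
          κ + ((P.2, P.1) : ℝ × ℝ).1 + ((P.2, P.1) : ℝ × ℝ).2]) (Equiv.swap 0 1 k) =
        (![3 * P.1, 3 * P.2, 0, κ + P.1 + P.2]) k := by
      intro k
      fin_cases k <;> simp [Equiv.swap_apply_of_ne_of_ne] <;> ring
    exact ⟨Equiv.swap 0 1 i, Equiv.swap 0 1 j,
      fun h => hij ((Equiv.swap 0 1).injective h),
      by rw [key i, key j]; exact heq,
      fun k => by
        have h := key (Equiv.swap 0 1 k)
        rw [Equiv.swap_apply_self] at h
        rw [key i, h]; exact hmax _⟩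
  · funext p; simp
  · funext p; simp [Prod.ext_iff]; ring
  · funext p; simp [Prod.ext_iff]
end
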